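/- Let f : [0,1] → ℝ be 1-periodic, differentiable on (0,1), with |f'(t)| ≤ K · min(t, 1-t)^{-1} for all t ∈ (0,1). Then there is a constant C (depending on K) such that |c_n| ≤ C · |n|^{-1} · log|n| for all integers n with |n| ≥ 2. -/

import Mathlib

open MeasureTheory intervalIntegral Real

open Set
open scoped Complex

/-!
Integrating `|f'| ≤ K / t` gives `|f t| ≤ |f (1/2)| + K log (1 / (2t))` near `0`, so the parts of
the Fourier integral over `[0, ε]` and `[1 - ε, 1]` are `O(ε log (1/ε))`. On `[ε, 1 - ε]` integrate
by parts: `e^{ct}` has an antiderivative of size `1 / |c| ≤ ε`, and both the boundary values of `f`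
and `∫ |f'|` over `[ε, 1 - ε]` are `O(log (1/ε))`. Choosing `ε = 1 / |n|` gives the bound. The
substitution `t ↦ 1 - t` turns the half `[1/2, 1]` into a copy of `[0, 1/2]` with `c` replaced by
`-c`, at the cost of a unimodular factor.
-/

theorem norm_cexp_mul_ofReal {c : ℂ} (hc : c.re = 0) (t : ℝ) : ‖cexp (c * t)‖ = 1 := by
  simp [Complex.norm_exp, hc]

theorem IntervalIntegrable.ofReal {f : ℝ → ℝ} {a b : ℝ} (hf : IntervalIntegrable f volume a b) :
    IntervalIntegrable (fun t => (f t : ℂ)) volume a b :=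
  ⟨hf.1.ofReal, hf.2.ofReal⟩

theorem IntervalIntegrable.ofReal_mul_cexp {f : ℝ → ℝ} {a b : ℝ}
    (hf : IntervalIntegrable f volume a b) (c : ℂ) :
    IntervalIntegrable (fun t => (f t : ℂ) * cexp (c * t)) volume a b :=
  hf.ofReal.mul_continuousOn (by fun_prop)

section LogGrowth

variable {g g' : ℝ → ℝ} {K b : ℝ}

theorem abs_sub_le_mul_log_sub_log (hderiv : ∀ t ∈ Ioc 0 b, HasDerivAt g (g' t) t)
    (hbound : ∀ t ∈ Ioc 0 b, |g' t| ≤ K / t) {t : ℝ} (ht : t ∈ Ioc 0 b) :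
    |g b - g t| ≤ K * (log b - log t) := by
  have hsub : Icc t b ⊆ Ioc 0 b := Icc_subset_Ioc ht.1 le_rfl
  have hlog : ∀ s ∈ Icc t b, HasDerivAt (fun s => K * (log s - log t)) (K / s) s := fun s hs => by
    simpa [div_eq_mul_inv] using ((hasDerivAt_log (hsub hs).1.ne').sub_const (log t)).const_mul K
  refine image_norm_le_of_norm_deriv_right_le_deriv_boundary' (f := fun s => g s - g t)
    (fun s hs => ((hderiv s (hsub hs)).sub_const (g t)).continuousAt.continuousWithinAt)
    (fun s hs => ((hderiv s (hsub (Ico_subset_Icc_self hs))).sub_const (g t)).hasDerivWithinAt)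
    (by simp) (fun s hs => (hlog s hs).continuousAt.continuousWithinAt)
    (fun s hs => (hlog s (Ico_subset_Icc_self hs)).hasDerivWithinAt)
    (fun s hs => hbound s (hsub (Ico_subset_Icc_self hs))) ⟨ht.2, le_rfl⟩

theorem abs_le_add_mul_log_sub_log (hderiv : ∀ t ∈ Ioc 0 b, HasDerivAt g (g' t) t)
    (hbound : ∀ t ∈ Ioc 0 b, |g' t| ≤ K / t) {t : ℝ} (ht : t ∈ Ioc 0 b) :
    |g t| ≤ |g b| + K * (log b - log t) := by
  have := abs_sub_le_mul_log_sub_log hderiv hbound ht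
  have := abs_sub_abs_le_abs_sub (g t) (g b)
  rw [abs_sub_comm] at this
  linarith

theorem intervalIntegrable_const_add_mul_log_sub_log (A : ℝ) (a : ℝ) :
    IntervalIntegrable (fun t => A + K * (log b - log t)) volume 0 a :=
  intervalIntegrable_const.add ((intervalIntegrable_const.sub intervalIntegrable_log').const_mul K)

theorem integral_const_add_mul_log_sub_log (A : ℝ) (a : ℝ) :
    ∫ t in (0)..a, (A + K * (log b - log t)) = a * (A + K + K * (log b - log a)) := by
  rw [integral_add intervalIntegrable_const
      ((intervalIntegrable_const.sub intervalIntegrable_log').const_mul K),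
    intervalIntegral.integral_const_mul,
    integral_sub intervalIntegrable_const intervalIntegrable_log', integral_log]
  simp only [intervalIntegral.integral_const, sub_zero, smul_eq_mul, log_zero, mul_zero]
  ring

theorem intervalIntegrable_of_abs_deriv_le_div (hderiv : ∀ t ∈ Ioc 0 b, HasDerivAt g (g' t) t)
    (hbound : ∀ t ∈ Ioc 0 b, |g' t| ≤ K / t) (hb : 0 ≤ b) : IntervalIntegrable g volume 0 b := by
  rw [intervalIntegrable_iff_integrableOn_Ioc_of_le hb]
  refine Integrable.mono' (intervalIntegrable_const_add_mul_log_sub_log (K := K) (b := b) |g b| b).1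
    (ContinuousOn.aestronglyMeasurable (fun t ht => (hderiv t ht).continuousAt.continuousWithinAt)
      measurableSet_Ioc) ?_
  filter_upwards [ae_restrict_mem measurableSet_Ioc] with t ht
  exact abs_le_add_mul_log_sub_log hderiv hbound ht

theorem nonneg_of_abs_le_div (hbound : ∀ t ∈ Ioc 0 b, |g' t| ≤ K / t) (hb : 0 < b) : 0 ≤ K := by
  have := mul_nonneg ((abs_nonneg _).trans (hbound b ⟨hb, le_rfl⟩)) hb.le
  rwa [div_mul_cancel₀ _ hb.ne'] at this

theorem intervalIntegrable_deriv_of_abs_le_div (hderiv : ∀ t ∈ Ioc 0 b, HasDerivAt g (g' t) t)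
    (hbound : ∀ t ∈ Ioc 0 b, |g' t| ≤ K / t) {a : ℝ} (ha : 0 < a) (hab : a ≤ b) :
    IntervalIntegrable g' volume a b := by
  have hsub : Ioc a b ⊆ Ioc 0 b := Ioc_subset_Ioc_left ha.le
  rw [intervalIntegrable_iff_integrableOn_Ioc_of_le hab]
  refine Integrable.mono' (integrableOn_const (C := K / a) measure_Ioc_lt_top.ne)
    ((measurable_deriv g).aestronglyMeasurable.congr ?_) ?_
  all_goals filter_upwards [ae_restrict_mem measurableSet_Ioc] with t ht
  · exact (hderiv t (hsub ht)).deriv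
  · exact (hbound t (hsub ht)).trans
      (div_le_div_of_nonneg_left (nonneg_of_abs_le_div hbound (ha.trans_le hab)) ha ht.1.le)

variable {c : ℂ} {ε : ℝ}

theorem norm_integral_mul_cexp_near_zero_le (hderiv : ∀ t ∈ Ioc 0 b, HasDerivAt g (g' t) t)
    (hbound : ∀ t ∈ Ioc 0 b, |g' t| ≤ K / t) (hc : c.re = 0) (hε : ε ∈ Ioc 0 b) :
    ‖∫ t in (0)..ε, (g t : ℂ) * cexp (c * t)‖ ≤ ε * (|g b| + K + K * (log b - log ε)) := by
  rw [← integral_const_add_mul_log_sub_log]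
  refine norm_integral_le_of_norm_le hε.1.le (Filter.Eventually.of_forall fun t ht => ?_)
    (intervalIntegrable_const_add_mul_log_sub_log _ _)
  rw [norm_mul, norm_cexp_mul_ofReal hc, mul_one, Complex.norm_real, Real.norm_eq_abs]
  exact abs_le_add_mul_log_sub_log hderiv hbound ⟨ht.1, ht.2.trans hε.2⟩

theorem norm_integral_mul_cexp_away_from_zero_le (hderiv : ∀ t ∈ Ioc 0 b, HasDerivAt g (g' t) t)
    (hbound : ∀ t ∈ Ioc 0 b, |g' t| ≤ K / t) (hc : c.re = 0) (hε : ε ∈ Ioc 0 b)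
    (hcε : ε⁻¹ ≤ ‖c‖) :
    ‖∫ t in ε..b, (g t : ℂ) * cexp (c * t)‖ ≤ ε * (2 * |g b| + 3 * K * (log b - log ε)) := by
  have hc0 : c ≠ 0 := norm_pos_iff.mp ((inv_pos.mpr hε.1).trans_le hcε)
  have hsub : Icc ε b ⊆ Ioc 0 b := Icc_subset_Ioc hε.1 le_rfl
  have hK := nonneg_of_abs_le_div hbound (hε.1.trans_le hε.2)
  have hlog : log ε ≤ log b := log_le_log hε.1 hε.2
  set v : ℝ → ℂ := fun t => cexp (c * t) / c
  have hv : ∀ t : ℝ, HasDerivAt v (cexp (c * t)) t := fun t => by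
    simpa [v, mul_div_cancel_right₀ _ hc0] using
      (((hasDerivAt_id (t : ℂ)).const_mul c).comp_ofReal.cexp).div_const c
  have hnv : ∀ t, ‖v t‖ ≤ ε := fun t => by
    rw [norm_div, norm_cexp_mul_ofReal hc, one_div]
    exact inv_le_of_inv_le₀ hε.1 hcε
  have hg' := intervalIntegrable_deriv_of_abs_le_div hderiv hbound hε.1 hε.2
  have hibp := intervalIntegral.integral_mul_deriv_eq_deriv_mul (u := fun t => (g t : ℂ))
    (u' := fun t => (g' t : ℂ)) (fun t ht => (hderiv t (hsub (uIcc_of_le hε.2 ▸ ht))).ofReal_comp)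
    (fun t _ => hv t) hg'.ofReal (Continuous.intervalIntegrable (by fun_prop) _ _)
  have hend : ∀ t ∈ Icc ε b, ‖(g t : ℂ) * v t‖ ≤ (|g b| + K * (log b - log ε)) * ε := fun t ht => by
    rw [norm_mul, Complex.norm_real, Real.norm_eq_abs]
    refine mul_le_mul ((abs_le_add_mul_log_sub_log hderiv hbound (hsub ht)).trans ?_) (hnv t)
      (norm_nonneg _) (by have := mul_nonneg hK (sub_nonneg.mpr hlog); positivity)
    gcongr
    exacts [hε.1, ht.1]
  have hmid : ‖∫ t in ε..b, (g' t : ℂ) * v t‖ ≤ ε * K * (log b - log ε) := calc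
    _ ≤ ∫ t in ε..b, ε * K * t⁻¹ := by
      refine norm_integral_le_of_norm_le hε.2 (Filter.Eventually.of_forall fun t ht => ?_)
        ((intervalIntegrable_inv_iff.mpr (Or.inr ?_)).const_mul _)
      · rw [norm_mul, Complex.norm_real, Real.norm_eq_abs, mul_comm, mul_assoc, ← div_eq_mul_inv]
        exact mul_le_mul (hnv t) (hbound t (hsub (Ioc_subset_Icc_self ht))) (abs_nonneg _) hε.1.le
      · rw [uIcc_of_le hε.2]
        exact fun h => hε.1.not_ge h.1
    _ = ε * K * (log b - log ε) := by
      rw [intervalIntegral.integral_const_mul, integral_inv_of_pos hε.1 (hε.1.trans_le hε.2),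
        log_div (hε.1.trans_le hε.2).ne' hε.1.ne']
  beta_reduce at hibp
  rw [hibp]
  have hb := hend b ⟨hε.2, le_rfl⟩
  have hε' := hend ε ⟨le_rfl, hε.2⟩
  calc _ ≤ ‖(g b : ℂ) * v b‖ + ‖(g ε : ℂ) * v ε‖ + ‖∫ t in ε..b, (g' t : ℂ) * v t‖ :=
        norm_sub_le_of_le (norm_sub_le _ _) le_rfl
    _ ≤ _ := by linarith

theorem norm_integral_mul_cexp_le (hderiv : ∀ t ∈ Ioc 0 b, HasDerivAt g (g' t) t)
    (hbound : ∀ t ∈ Ioc 0 b, |g' t| ≤ K / t) (hc : c.re = 0) (hε : ε ∈ Ioc 0 b)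
    (hcε : ε⁻¹ ≤ ‖c‖) :
    ‖∫ t in (0)..b, (g t : ℂ) * cexp (c * t)‖ ≤ ε * (3 * |g b| + K + 4 * K * (log b - log ε)) := by
  have hint := (intervalIntegrable_of_abs_deriv_le_div hderiv hbound
    (hε.1.le.trans hε.2)).ofReal_mul_cexp c
  have hεmem : ε ∈ uIcc 0 b := mem_uIcc_of_le hε.1.le hε.2
  rw [← integral_add_adjacent_intervals (hint.mono_set (uIcc_subset_uIcc left_mem_uIcc hεmem))
    (hint.mono_set (uIcc_subset_uIcc hεmem right_mem_uIcc))]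
  calc _ ≤ _ := norm_add_le _ _
    _ ≤ _ := add_le_add (norm_integral_mul_cexp_near_zero_le hderiv hbound hc hε)
        (norm_integral_mul_cexp_away_from_zero_le hderiv hbound hc hε hcε)
    _ = _ := by ring

end LogGrowth

theorem norm_integral_mul_cexp_comp_sub_left (F : ℝ → ℂ) {c : ℂ} (hc : c.re = 0) (a b d : ℝ) :
    ‖∫ t in a..b, F t * cexp (c * t)‖ = ‖∫ t in d - b..d - a, F (d - t) * cexp (-c * t)‖ := by
  have hexp : ∀ t : ℝ, cexp (-c * ↑(d - t)) = cexp (-c * d) * cexp (c * t) := fun t => by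
    rw [← Complex.exp_add]; push_cast; ring_nf
  rw [← intervalIntegral.integral_comp_sub_left (fun t => F (d - t) * cexp (-c * t)) d]
  simp only [sub_sub_cancel, hexp, mul_left_comm _ (cexp (-c * d)),
    intervalIntegral.integral_const_mul, norm_mul,
    norm_cexp_mul_ofReal (by simp [hc] : (-c).re = 0), one_mul]

theorem norm_integral_zero_one_mul_cexp_le {f f' : ℝ → ℝ} {K ε : ℝ} {c : ℂ}
    (hderiv : ∀ t ∈ Ioo 0 1, HasDerivAt f (f' t) t)
    (hbound : ∀ t ∈ Ioo 0 1, |f' t| ≤ K / min t (1 - t)) (hc : c.re = 0)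
    (hε : ε ∈ Ioc 0 (1 / 2)) (hcε : ε⁻¹ ≤ ‖c‖) :
    ‖∫ t in (0)..1, (f t : ℂ) * cexp (c * t)‖ ≤
      2 * (ε * (3 * |f (1 / 2)| + K + 4 * K * (log (1 / 2) - log ε))) := by
  have hmem : ∀ t ∈ Ioc (0:ℝ) (1 / 2), t ∈ Ioo (0:ℝ) 1 ∧ 1 - t ∈ Ioo (0:ℝ) 1 := fun t ht =>
    ⟨⟨ht.1, by linarith [ht.2]⟩, ⟨by linarith [ht.2], by linarith [ht.1]⟩⟩
  have hderiv_left : ∀ t ∈ Ioc (0:ℝ) (1 / 2), HasDerivAt f (f' t) t :=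
    fun t ht => hderiv t (hmem t ht).1
  have hderiv_right : ∀ t ∈ Ioc (0:ℝ) (1 / 2), HasDerivAt (fun s => f (1 - s)) (-f' (1 - t)) t :=
    fun t ht => (hderiv (1 - t) (hmem t ht).2).comp_const_sub 1 t
  have hbound_left : ∀ t ∈ Ioc (0:ℝ) (1 / 2), |f' t| ≤ K / t := fun t ht => by
    simpa [min_eq_left (by linarith [ht.2] : t ≤ 1 - t)] using hbound t (hmem t ht).1
  have hbound_right : ∀ t ∈ Ioc (0:ℝ) (1 / 2), |-f' (1 - t)| ≤ K / t := fun t ht => by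
    simpa [min_eq_right (by linarith [ht.2] : t ≤ 1 - t)] using hbound (1 - t) (hmem t ht).2
  have hint_left := intervalIntegrable_of_abs_deriv_le_div hderiv_left hbound_left (by norm_num)
  have hint_right : IntervalIntegrable f volume (1 / 2) 1 := by
    have := ((intervalIntegrable_of_abs_deriv_le_div hderiv_right hbound_right
      (by norm_num)).comp_sub_left 1).symm
    norm_num at this
    exact this
  have hright : ‖∫ t in (1 / 2)..1, (f t : ℂ) * cexp (c * t)‖ ≤
      ε * (3 * |f (1 / 2)| + K + 4 * K * (log (1 / 2) - log ε)) := by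
    have h := norm_integral_mul_cexp_le hderiv_right hbound_right (c := -c) (by simp [hc]) hε
      (by rwa [norm_neg])
    rw [norm_integral_mul_cexp_comp_sub_left _ hc _ _ 1, sub_self]
    norm_num at h ⊢
    exact h
  rw [← integral_add_adjacent_intervals (hint_left.ofReal_mul_cexp c)
    (hint_right.ofReal_mul_cexp c), two_mul]
  exact (norm_add_le _ _).trans
    (add_le_add (norm_integral_mul_cexp_le hderiv_left hbound_left hc hε hcε) hright)

theorem stmt_4_general (K : ℝ)
    (f f' : ℝ → ℝ)
    (hderiv : ∀ t ∈ Set.Ioo (0:ℝ) 1, HasDerivAt f (f' t) t)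
    (hbound : ∀ t ∈ Set.Ioo (0:ℝ) 1, |f' t| ≤ K * (min t (1 - t)) ^ (-1 : ℝ)) :
    ∃ C : ℝ, ∀ n : ℤ, 2 ≤ |n| →
      ‖∫ t in (0:ℝ)..1, (f t : ℂ) * Complex.exp (-2 * Real.pi * Complex.I * n * t)‖
        ≤ C * |(n : ℝ)|⁻¹ * Real.log |(n : ℝ)| := by
  have hbound' : ∀ t ∈ Ioo (0:ℝ) 1, |f' t| ≤ K / min t (1 - t) := fun t ht => by
    simpa [rpow_neg_one, div_eq_mul_inv] using hbound t ht
  have hK : 0 ≤ K := by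
    have := (abs_nonneg _).trans (hbound' (1 / 2) (by norm_num))
    norm_num [div_eq_mul_inv] at this
    exact this
  refine ⟨12 * (|f (1 / 2)| + K), fun n hn => ?_⟩
  set N : ℝ := |(n : ℝ)|
  have hN : 2 ≤ N := by simpa [N, ← Int.cast_abs] using (Int.cast_le (R := ℝ)).mpr hn
  have hε : N⁻¹ ∈ Ioc (0:ℝ) (1 / 2) :=
    ⟨by positivity, by rw [inv_le_comm₀ (by linarith) (by norm_num)]; linarith⟩
  have hcN : N⁻¹⁻¹ ≤ ‖-2 * π * Complex.I * n‖ := by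
    rw [inv_inv, norm_mul, norm_mul, norm_mul, norm_neg, Complex.norm_ofNat, Complex.norm_intCast,
      Complex.norm_I, mul_one, Complex.norm_real, norm_eq_abs, abs_of_pos pi_pos]
    nlinarith [pi_gt_three, abs_nonneg (n : ℝ)]
  have hlog : log (1 / 2) - log N⁻¹ ≤ log N := by
    rw [log_inv, one_div, log_inv]; linarith [log_pos one_lt_two]
  have hlogN : 1 / 2 ≤ log N := by linarith [log_le_log two_pos hN, log_two_gt_d9]
  have hsum : 3 * |f (1 / 2)| + K + 4 * K * (log (1 / 2) - log N⁻¹) ≤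
      6 * (|f (1 / 2)| + K) * log N := by
    nlinarith [abs_nonneg (f (1 / 2)), mul_le_mul_of_nonneg_left hlog hK]
  calc _ ≤ _ := norm_integral_zero_one_mul_cexp_le hderiv hbound' (by simp) hε hcN
    _ ≤ 2 * (N⁻¹ * (6 * (|f (1 / 2)| + K) * log N)) := by gcongr
    _ = _ := by ring

theorem stmt_4 (K : ℝ)
    (f f' : ℝ → ℝ) (hper : Function.Periodic f 1)
    (hderiv : ∀ t ∈ Set.Ioo (0:ℝ) 1, HasDerivAt f (f' t) t)
    (hbound : ∀ t ∈ Set.Ioo (0:ℝ) 1, |f' t| ≤ K * (min t (1 - t)) ^ (-1 : ℝ))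
    (hL2 : MemLp f 2 (MeasureTheory.volume.restrict (Set.Icc (0:ℝ) 1))) :
    ∃ C : ℝ, ∀ n : ℤ, 2 ≤ |n| →
      ‖∫ t in (0:ℝ)..1, (f t : ℂ) * Complex.exp (-2 * Real.pi * Complex.I * n * t)‖
        ≤ C * |(n : ℝ)|⁻¹ * Real.log |(n : ℝ)| :=
  stmt_4_general K f f' hderiv hbound
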